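/- arXiv:2001.04211 — 3 statements merged into one kernel-verified Lean document; each statement's English description precedes it below -/
import Mathlib

section
/- Let (Z_t) be a Lévy process on ℝ^d such that the support of the law of Z_t is all of ℝ^d for each t > 0, let X₀ be a random variable independent of (Z_t), and let b : ℝ^d → ℝ^d be bounded measurable. Suppose (Y_t) satisfies Y_t = X₀ + ∫_0^t b(Y_s) ds + Z_t. Then for every z ∈ ℝ^d, r > 0 and every λ > 0, the measure γ(C) = E ∫_0^∞ e^{-λt} 1_C(Y_t) dt satisfies γ(B(z,r)) > 0. -/
open MeasureTheory ProbabilityTheory Real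
open scoped ENNReal

/-!
On a short time interval `(0, t₀)` with `B t₀ < r / 2` the drift moves `Y t` by less than
`r / 2`, so `Y t ∈ ball z r` as soon as `X₀ + Z t ∈ ball z (r / 2)`. By independence the law of
`X₀ + Z t` is the convolution of the laws of `X₀` and `Z t`, which charges every nonempty open set
because the law of `Z t` does. Hence the integrand is positive on `(0, t₀)`.
-/

open Set Metric

namespace MeasureTheory.Measure

variable {G : Type*} [AddGroup G] [TopologicalSpace G] [ContinuousAdd G] [MeasurableSpace G]
  [MeasurableAdd₂ G] [OpensMeasurableSpace G]

instance isOpenPosMeasure_conv (μ ν : Measure G) [NeZero μ] [SFinite ν] [ν.IsOpenPosMeasure] :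
    (μ ∗ ν).IsOpenPosMeasure where
  open_pos U hU hne := by
    have hsum : MeasurableSet ((fun p : G × G ↦ p.1 + p.2) ⁻¹' U) :=
      measurable_add hU.measurableSet
    have hfiber (x : G) : ν (Prod.mk x ⁻¹' ((fun p : G × G ↦ p.1 + p.2) ⁻¹' U)) ≠ 0 := by
      obtain ⟨u, hu⟩ := hne
      refine ((hU.preimage (continuous_const_add x)).measure_pos ν ⟨-x + u, ?_⟩).ne'
      simpa [← add_assoc]
    rw [conv, map_apply measurable_add hU.measurableSet, prod_apply hsum]
    refine ((lintegral_pos_iff_support (measurable_measure_prodMk_left hsum)).2 ?_).ne'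
    simpa [Function.support, hfiber] using NeZero.ne μ

end MeasureTheory.Measure

theorem ProbabilityTheory.IndepFun.measure_add_mem_pos {Ω G : Type*} [MeasurableSpace Ω]
    {P : Measure Ω} [IsFiniteMeasure P] [NeZero P] [AddGroup G] [TopologicalSpace G] [ContinuousAdd G]
    [MeasurableSpace G] [MeasurableAdd₂ G] [OpensMeasurableSpace G] {X W : Ω → G}
    (hX : Measurable X) (hW : Measurable W) (hXW : IndepFun X W P) [(P.map W).IsOpenPosMeasure]
    {U : Set G} (hU : IsOpen U) (hne : U.Nonempty) : 0 < P {ω | X ω + W ω ∈ U} := by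
  have : NeZero (P.map X) := ⟨(Measure.map_ne_zero_iff hX.aemeasurable).2 (NeZero.ne P)⟩
  change 0 < P ((X + W) ⁻¹' U)
  rw [← Measure.map_apply_of_aemeasurable (hX.add hW).aemeasurable hU.measurableSet,
    hXW.map_add_eq_map_conv_map hX hW]
  exact hU.measure_pos _ hne

theorem setLIntegral_Ioi_pos_of_pos_on_Ioo {f : ℝ → ℝ≥0∞} (hf : Measurable f) {a b : ℝ}
    (hab : a < b) (hpos : ∀ t ∈ Ioo a b, 0 < f t) : 0 < ∫⁻ t in Ioi a, f t := by
  rw [setLIntegral_pos_iff hf]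
  calc (0 : ℝ≥0∞) < volume (Ioo a b) := by simpa using hab
    _ ≤ volume (Function.support f ∩ Ioi a) :=
      measure_mono fun t ht ↦ ⟨(hpos t ht).ne', ht.1⟩

theorem stmt9_general (d : ℕ)
    (Ω : Type*) [MeasurableSpace Ω] (P : Measure Ω) [IsProbabilityMeasure P]
    (Z : ℝ → Ω → EuclideanSpace ℝ (Fin d))
    (hZmeas : ∀ t, Measurable (Z t))
    -- the law of `Z t` has full support for every `t > 0`
    (hZsupp : ∀ t > (0:ℝ), ∀ U : Set (EuclideanSpace ℝ (Fin d)),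
      IsOpen U → U.Nonempty → 0 < Measure.map (Z t) P U)
    (X₀ : Ω → EuclideanSpace ℝ (Fin d)) (hX₀ : Measurable X₀)
    (hindep : ∀ t > (0:ℝ), IndepFun X₀ (Z t) P)
    (b : EuclideanSpace ℝ (Fin d) → EuclideanSpace ℝ (Fin d))
    (B : ℝ) (hb : ∀ x, ‖b x‖ ≤ B)
    (Y : ℝ → Ω → EuclideanSpace ℝ (Fin d))
    (hYmeas : Measurable (Function.uncurry Y))
    (hY : ∀ (t : ℝ), 0 ≤ t → ∀ ω, Y t ω = X₀ ω + (∫ s in (0:ℝ)..t, b (Y s ω)) + Z t ω) :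
    ∀ (z : EuclideanSpace ℝ (Fin d)) (r : ℝ), 0 < r → ∀ l : ℝ, 0 < l →
      0 < ∫⁻ t in Set.Ioi (0:ℝ),
            ENNReal.ofReal (Real.exp (-l * t)) * P {ω | Y t ω ∈ Metric.ball z r} := by
  intro z r hr l _
  have hB : 0 ≤ B := (norm_nonneg _).trans (hb 0)
  obtain ⟨t₀, ht₀, hBt₀⟩ := exists_pos_mul_lt (half_pos hr) B
  have hocc : Measurable fun t ↦ P {ω | Y t ω ∈ ball z r} :=
    measurable_measure_prodMk_left (hYmeas measurableSet_ball)
  refine setLIntegral_Ioi_pos_of_pos_on_Ioo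
    ((measurable_const.mul measurable_id).exp.ennreal_ofReal.mul hocc) ht₀ fun t ht ↦ ?_
  have hdrift (ω : Ω) : ‖∫ s in (0:ℝ)..t, b (Y s ω)‖ < r / 2 :=
    calc _ ≤ B * |t - 0| := intervalIntegral.norm_integral_le_of_norm_le_const fun s _ ↦ hb _
      _ < r / 2 := by
        rw [sub_zero, abs_of_pos ht.1]
        exact (mul_le_mul_of_nonneg_left ht.2.le hB).trans_lt hBt₀
  have hsub : {ω | X₀ ω + Z t ω ∈ ball z (r / 2)} ⊆ {ω | Y t ω ∈ ball z r} := fun ω hω ↦ by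
    change dist (Y t ω) z < r
    rw [hY t ht.1.le ω, add_right_comm]
    calc _ ≤ ‖∫ s in (0:ℝ)..t, b (Y s ω)‖ + dist (X₀ ω + Z t ω) z :=
          (dist_triangle _ (X₀ ω + Z t ω) z).trans_eq (by rw [dist_self_add_left])
      _ < r / 2 + r / 2 := add_lt_add (hdrift ω) hω
      _ = r := add_halves r
  have : (P.map (Z t)).IsOpenPosMeasure := ⟨fun U hU hne ↦ (hZsupp t ht.1 U hU hne).ne'⟩
  have hpos := (hindep t ht.1).measure_add_mem_pos hX₀ (hZmeas t) (isOpen_ball (x := z))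
    (nonempty_ball.2 (half_pos hr))
  exact ENNReal.mul_pos (by simp [exp_pos]) (hpos.trans_le (measure_mono hsub)).ne'

theorem stmt9 (d : ℕ)
    (Ω : Type*) [MeasurableSpace Ω] (P : Measure Ω) [IsProbabilityMeasure P]
    (Z : ℝ → Ω → EuclideanSpace ℝ (Fin d))
    (hZmeas : ∀ t, Measurable (Z t))
    -- the law of `Z t` has full support for every `t > 0`
    (hZsupp : ∀ t > (0:ℝ), ∀ U : Set (EuclideanSpace ℝ (Fin d)),
      IsOpen U → U.Nonempty → 0 < Measure.map (Z t) P U)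
    (X₀ : Ω → EuclideanSpace ℝ (Fin d)) (hX₀ : Measurable X₀)
    (hindep : ∀ t > (0:ℝ), IndepFun X₀ (Z t) P)
    (b : EuclideanSpace ℝ (Fin d) → EuclideanSpace ℝ (Fin d)) (hbmeas : Measurable b)
    (B : ℝ) (hb : ∀ x, ‖b x‖ ≤ B)
    (Y : ℝ → Ω → EuclideanSpace ℝ (Fin d))
    (hYmeas : Measurable (Function.uncurry Y))
    (hY : ∀ (t : ℝ), 0 ≤ t → ∀ ω, Y t ω = X₀ ω + (∫ s in (0:ℝ)..t, b (Y s ω)) + Z t ω) :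
    ∀ (z : EuclideanSpace ℝ (Fin d)) (r : ℝ), 0 < r → ∀ l : ℝ, 0 < l →
      0 < ∫⁻ t in Set.Ioi (0:ℝ),
            ENNReal.ofReal (Real.exp (-l * t)) * P {ω | Y t ω ∈ Metric.ball z r} :=
  stmt9_general d Ω P Z hZmeas hZsupp X₀ hX₀ hindep b B hb Y hYmeas hY
end

section
/- Let p̃(t,x,y) = p_{Z_t}(y - x - b₀t) where p_{Z_t} is a density satisfying: there exist probability densities q̄(t,·) with q̄(t,x) = t^{-d}q̄(1,x/t), a constant C and β ∈ (0,1) such that |Dp_{Z_t}(z) - Dp_{Z_t}(z')| ≤ (C/t)(|z-z'|/t)^β (q̄(t,z) + q̄(t,z')), and q̄(t, x + h) ≤ C q̄(t,x) whenever |h| ≤ |b₀| t. Suppose also ∫|z|^η q̄(1,z)dz < ∞ for all η ∈ (0,1). Then there exist constants K ≥ 1 and C' (depending on C, β, |b₀|) such that for all λ ≥ 1 and all x, ξ ∈ ℝ^d: ∫_0^∞ e^{-λt} ∫_{|x-y| ≥ K|x-ξ|} |Dp̃(t,x,y) - Dp̃(t,ξ,y)| dy dt ≤ C'(1 + λ^{-1}).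 -/
/-!
With `r = ‖x - ξ‖`, the Hölder bound for `D p_{Z_t}` dominates the integrand by `(C/t)(r/t)^β`
times two translates of `q̄(t, ·)`, and `e^{-λt} ≤ 1` is simply discarded. For `t > r` the
translates have total mass `2`, which gives `2C r^β t^{-1-β}`, integrable at infinity. For
`t ≤ r`, the region `‖x - y‖ ≥ (2 + ‖b₀‖) r` keeps both translated arguments at norm at least `r`,
where `q̄ ≤ (‖z‖/r)^η q̄` with `η = (1 + β)/2 ∈ (β, 1)`; by self-similarity the `η`-moment of
`q̄(t, ·)` is `t^η` times that of `q̄(1, ·)`, which gives `2CM r^{β-η} t^{η-β-1}`, integrable at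
zero. Both time integrals are independent of `r`.
-/

open MeasureTheory Real Set

theorem le_norm_sub_sub_of_add_le {E : Type*} [SeminormedAddCommGroup E] {x y ξ v : E} {ρ : ℝ}
    (h : ‖x - ξ‖ + ‖v‖ + ρ ≤ ‖x - y‖) : ρ ≤ ‖y - ξ - v‖ := by
  have hsplit : x - y = (x - ξ) - v - (y - ξ - v) := by abel
  have := norm_sub_le (x - ξ - v) (y - ξ - v)
  have := norm_sub_le (x - ξ) v
  rw [hsplit] at h
  linarith

section Translates

variable {E G : Type*} [NormedAddCommGroup E] [NormedAddCommGroup G]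

theorem norm_sub_translates_le {D : E → G} {q : E → ℝ} {C β t : ℝ}
    (hD : ∀ z z', ‖D z - D z'‖ ≤ C / t * (‖z - z'‖ / t) ^ β * (q z + q z')) (x ξ v y : E) :
    ‖D (y - x - v) - D (y - ξ - v)‖ ≤
      C / t * (‖x - ξ‖ / t) ^ β * (q (y - (x + v)) + q (y - (ξ + v))) := by
  have hdist : (y - x - v) - (y - ξ - v) = ξ - x := by abel
  have h := hD (y - x - v) (y - ξ - v)
  rw [hdist, norm_sub_rev ξ x] at h
  simpa only [sub_sub] using h

variable [MeasurableSpace E] [MeasurableAdd E] {μ : Measure E} [μ.IsAddRightInvariant]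

theorem setIntegral_le_of_le_translates {F q : E → ℝ} {S : Set E} (hF : 0 ≤ F) (hq0 : 0 ≤ q)
    (hq : Integrable q μ) {A : ℝ} (hA : 0 ≤ A) (a a' : E)
    (hFq : ∀ᵐ y ∂μ.restrict S, F y ≤ A * (q (y - a) + q (y - a'))) :
    ∫ y in S, F y ∂μ ≤ A * (2 * ∫ y, q y ∂μ) := by
  have hqa : Integrable (fun y => A * (q (y - a) + q (y - a'))) μ :=
    ((hq.comp_sub_right a).add (hq.comp_sub_right a')).const_mul A
  calc ∫ y in S, F y ∂μ ≤ ∫ y in S, A * (q (y - a) + q (y - a')) ∂μ :=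
        integral_mono_of_nonneg (ae_of_all _ hF) hqa.integrableOn hFq
    _ ≤ ∫ y, A * (q (y - a) + q (y - a')) ∂μ :=
        setIntegral_le_integral hqa
          (ae_of_all _ fun y => mul_nonneg hA (add_nonneg (hq0 _) (hq0 _)))
    _ = A * (2 * ∫ y, q y ∂μ) := by
        rw [integral_const_mul, integral_add (hq.comp_sub_right a) (hq.comp_sub_right a'),
          integral_sub_right_eq_self, integral_sub_right_eq_self, two_mul]

variable {D : E → G} {q : E → ℝ} {C β t : ℝ}

theorem setIntegral_norm_sub_translates_le (hC : 0 ≤ C) (ht : 0 < t)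
    (hD : ∀ z z', ‖D z - D z'‖ ≤ C / t * (‖z - z'‖ / t) ^ β * (q z + q z'))
    (hq0 : 0 ≤ q) (hq1 : ∫ z, q z ∂μ = 1) (x ξ v : E) (S : Set E) :
    ∫ y in S, ‖D (y - x - v) - D (y - ξ - v)‖ ∂μ ≤ C / t * (‖x - ξ‖ / t) ^ β * 2 := by
  have hq : Integrable q μ := Integrable.of_integral_ne_zero (by rw [hq1]; exact one_ne_zero)
  simpa only [hq1, mul_one] using setIntegral_le_of_le_translates (fun _ => norm_nonneg _) hq0 hq
    (by positivity) (x + v) (ξ + v) (ae_of_all _ (norm_sub_translates_le hD x ξ v))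

theorem setIntegral_norm_sub_translates_le_of_far (hC : 0 ≤ C) (ht : 0 < t)
    (hD : ∀ z z', ‖D z - D z'‖ ≤ C / t * (‖z - z'‖ / t) ^ β * (q z + q z'))
    (hq0 : 0 ≤ q) {η κ : ℝ} (hη : 0 ≤ η) (hqη : Integrable (fun z => ‖z‖ ^ η * q z) μ)
    {x ξ v : E} (hxξ : x ≠ ξ) (hv : ‖v‖ ≤ κ * ‖x - ξ‖) {S : Set E} (hS : MeasurableSet S)
    (hfar : ∀ y ∈ S, (2 + κ) * ‖x - ξ‖ ≤ ‖x - y‖) :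
    ∫ y in S, ‖D (y - x - v) - D (y - ξ - v)‖ ∂μ ≤
      C / t * (‖x - ξ‖ / t) ^ β * (‖x - ξ‖ ^ η)⁻¹ * (2 * ∫ z, ‖z‖ ^ η * q z ∂μ) := by
  have hr : 0 < ‖x - ξ‖ := norm_sub_pos_iff.2 hxξ
  have hweight : ∀ z, ‖x - ξ‖ ≤ ‖z‖ → q z ≤ (‖x - ξ‖ ^ η)⁻¹ * (‖z‖ ^ η * q z) := fun z hz => by
    rw [inv_mul_eq_div, le_div_iff₀ (rpow_pos_of_pos hr η), mul_comm]
    exact mul_le_mul_of_nonneg_right (rpow_le_rpow hr.le hz hη) (hq0 z)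
  refine setIntegral_le_of_le_translates (fun _ => norm_nonneg _)
    (fun z => mul_nonneg (rpow_nonneg (norm_nonneg z) η) (hq0 z)) hqη (by positivity)
    (x + v) (ξ + v) (ae_restrict_of_forall_mem hS fun y hy => ?_)
  have hfar_x : ‖x - ξ‖ ≤ ‖y - (x + v)‖ := by
    rw [← sub_sub]
    exact le_norm_sub_sub_of_add_le (by rw [sub_self, norm_zero]; nlinarith [hfar y hy])
  have hfar_ξ : ‖x - ξ‖ ≤ ‖y - (ξ + v)‖ := by
    rw [← sub_sub]
    exact le_norm_sub_sub_of_add_le (by nlinarith [hfar y hy])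
  refine (norm_sub_translates_le hD x ξ v y).trans ?_
  rw [mul_assoc _ (‖x - ξ‖ ^ η)⁻¹, mul_add (‖x - ξ‖ ^ η)⁻¹]
  gcongr
  exacts [hweight _ hfar_x, hweight _ hfar_ξ]

end Translates

section Scaling

variable {E : Type*} [NormedAddCommGroup E] [NormedSpace ℝ E]

theorem norm_rpow_mul_rescale_eq (f : E → ℝ) (η : ℝ) {t : ℝ} (ht : 0 < t) :
    (fun z => ‖z‖ ^ η * (t ^ (-(Module.finrank ℝ E : ℝ)) * f (t⁻¹ • z))) =
      fun z => t ^ (η - Module.finrank ℝ E) * (‖t⁻¹ • z‖ ^ η * f (t⁻¹ • z)) := by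
  funext z
  rw [norm_smul, norm_inv, norm_of_nonneg ht.le, mul_rpow (inv_nonneg.2 ht.le) (norm_nonneg z),
    inv_rpow ht.le, sub_eq_add_neg, rpow_add ht]
  field_simp

variable [MeasurableSpace E] [BorelSpace E] [FiniteDimensional ℝ E] (μ : Measure E)
  [μ.IsAddHaarMeasure] {f g : E → ℝ} {η t : ℝ}

theorem integrable_norm_rpow_mul_of_rescale (ht : 0 < t)
    (hg : ∀ z, g z = t ^ (-(Module.finrank ℝ E : ℝ)) * f (t⁻¹ • z))
    (hf : Integrable (fun z => ‖z‖ ^ η * f z) μ) : Integrable (fun z => ‖z‖ ^ η * g z) μ := by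
  obtain rfl : g = _ := funext hg
  rw [norm_rpow_mul_rescale_eq f η ht]
  exact Integrable.const_mul
    ((integrable_comp_smul_iff μ (fun z => ‖z‖ ^ η * f z) (inv_ne_zero ht.ne')).2 hf) _

theorem integral_norm_rpow_mul_of_rescale (ht : 0 < t)
    (hg : ∀ z, g z = t ^ (-(Module.finrank ℝ E : ℝ)) * f (t⁻¹ • z)) :
    ∫ z, ‖z‖ ^ η * g z ∂μ = t ^ η * ∫ z, ‖z‖ ^ η * f z ∂μ := by
  obtain rfl : g = _ := funext hg
  rw [norm_rpow_mul_rescale_eq f η ht, integral_const_mul,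
    Measure.integral_comp_smul μ (fun z => ‖z‖ ^ η * f z), smul_eq_mul, inv_pow, inv_inv,
    abs_of_pos (pow_pos ht _), ← mul_assoc, ← rpow_natCast, ← rpow_add ht, sub_add_cancel]

end Scaling

section TimeIntegral

variable {F : ℝ → ℝ} {r β : ℝ}

theorem setIntegral_Ioi_le_of_rpow_bounds {a b γ : ℝ} (hβ : 0 < β) (hγ : 0 < γ) (hr : 0 < r)
    (hF : ∀ t ∈ Ioi 0, 0 ≤ F t) (hsmall : ∀ t ∈ Ioc 0 r, F t ≤ a * t ^ (γ - 1))
    (hlarge : ∀ t ∈ Ioi r, F t ≤ b * t ^ (-β - 1)) :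
    ∫ t in Ioi 0, F t ≤ a * (r ^ γ / γ) + b * (r ^ (-β) / β) := by
  set g : ℝ → ℝ := fun t => if t ≤ r then a * t ^ (γ - 1) else b * t ^ (-β - 1)
  have hg_small : ∀ t ∈ Ioc 0 r, g t = a * t ^ (γ - 1) := fun t ht => if_pos ht.2
  have hg_large : ∀ t ∈ Ioi r, g t = b * t ^ (-β - 1) := fun t ht => if_neg (not_le.2 ht)
  have hint_small : IntegrableOn g (Ioc 0 r) :=
    IntegrableOn.congr_fun ((intervalIntegral.intervalIntegrable_rpow' (r := γ - 1)
      (by linarith)).1.const_mul a) (fun t ht => (hg_small t ht).symm) measurableSet_Ioc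
  have hint_large : IntegrableOn g (Ioi r) :=
    IntegrableOn.congr_fun
      ((integrableOn_Ioi_rpow_of_lt (a := -β - 1) (by linarith) hr).const_mul b) (fun t ht => (hg_large t ht).symm) measurableSet_Ioi
  have hFg : ∀ t ∈ Ioi 0, F t ≤ g t := fun t ht => by
    rcases le_or_gt t r with htr | htr
    · exact (hsmall t ⟨ht, htr⟩).trans_eq (hg_small t ⟨ht, htr⟩).symm
    · exact (hlarge t htr).trans_eq (hg_large t htr).symm
  calc ∫ t in Ioi 0, F t ≤ ∫ t in Ioi 0, g t :=
        integral_mono_of_nonneg (ae_restrict_of_forall_mem measurableSet_Ioi hF)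
          (by rw [← Ioc_union_Ioi_eq_Ioi hr.le]; exact hint_small.union hint_large)
          (ae_restrict_of_forall_mem measurableSet_Ioi hFg)
    _ = (∫ t in Ioc 0 r, g t) + ∫ t in Ioi r, g t := by
        rw [← Ioc_union_Ioi_eq_Ioi hr.le,
          setIntegral_union (Ioc_disjoint_Ioi le_rfl) measurableSet_Ioi hint_small hint_large]
    _ = a * (r ^ γ / γ) + b * (r ^ (-β) / β) := by
        rw [setIntegral_congr_fun measurableSet_Ioc hg_small,
          setIntegral_congr_fun measurableSet_Ioi hg_large, integral_const_mul, integral_const_mul,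
          ← intervalIntegral.integral_of_le hr.le, integral_rpow (Or.inl (by linarith)),
          integral_Ioi_rpow_of_lt (by linarith) hr, sub_add_cancel, zero_rpow hγ.ne', sub_zero,
          show -β - 1 + 1 = -β by ring, neg_div_neg_eq]

theorem setIntegral_Ioi_le_of_scaled_bounds {C η a b : ℝ} (hβ : 0 < β) (hβη : β < η)
    (hr : 0 < r) (hF : ∀ t ∈ Ioi 0, 0 ≤ F t)
    (hsmall : ∀ t ∈ Ioc 0 r, F t ≤ C / t * (r / t) ^ β * (a * (t / r) ^ η))
    (hlarge : ∀ t ∈ Ioi r, F t ≤ C / t * (r / t) ^ β * b) :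
    ∫ t in Ioi 0, F t ≤ C * (a / (η - β) + b / β) := by
  have hscaled : ∀ t > 0, ∀ γ c, C / t * (r / t) ^ β * (c * (t / r) ^ γ) =
      C * c * r ^ (β - γ) * t ^ (γ - β - 1) := fun t ht γ c => by
    rw [div_rpow hr.le ht.le, div_rpow ht.le hr.le, rpow_sub hr, rpow_sub_one ht.ne', rpow_sub ht]
    field_simp
  refine (setIntegral_Ioi_le_of_rpow_bounds (a := C * a * r ^ (β - η)) (b := C * b * r ^ β) hβ
    (sub_pos.2 hβη) hr hF (fun t ht => (hsmall t ht).trans_eq (by rw [hscaled t ht.1, sub_sub]))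
    (fun t ht => (hlarge t ht).trans_eq ?_)).trans_eq ?_
  · simpa using hscaled t (hr.trans ht) 0 b
  · have : η - β ≠ 0 := (sub_pos.2 hβη).ne'
    rw [rpow_sub hr β η, rpow_sub hr η β, rpow_neg hr.le]
    field_simp

end TimeIntegral

theorem stmt11_general (d : ℕ) (b₀ : EuclideanSpace ℝ (Fin d))
    (pZ : ℝ → EuclideanSpace ℝ (Fin d) → ℝ)
    (qbar : ℝ → EuclideanSpace ℝ (Fin d) → ℝ)
    (hqpos : ∀ t > (0:ℝ), ∀ x, 0 ≤ qbar t x)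
    (hqint : ∀ t > (0:ℝ), ∫ x, qbar t x = 1)
    (hqscale : ∀ t > (0:ℝ), ∀ x, qbar t x = t ^ (-(d : ℝ)) * qbar 1 (t⁻¹ • x))
    (C β : ℝ) (hC : 0 < C) (hβ : 0 < β) (hβ1 : β < 1)
    (hHolder : ∀ t > (0:ℝ), ∀ z z' : EuclideanSpace ℝ (Fin d),
      ‖fderiv ℝ (pZ t) z - fderiv ℝ (pZ t) z'‖ ≤
        (C / t) * (‖z - z'‖ / t) ^ β * (qbar t z + qbar t z'))
    (hmom : ∀ η : ℝ, 0 < η → η < 1 → Integrable (fun z => ‖z‖ ^ η * qbar 1 z)) :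
    ∃ K : ℝ, 1 ≤ K ∧ ∃ C' : ℝ, ∀ l : ℝ, 1 ≤ l → ∀ x ξ : EuclideanSpace ℝ (Fin d),
      (∫ t in Set.Ioi (0:ℝ), Real.exp (-l * t) *
          ∫ y in {y : EuclideanSpace ℝ (Fin d) | K * ‖x - ξ‖ ≤ ‖x - y‖},
            ‖fderiv ℝ (pZ t) (y - x - t • b₀) - fderiv ℝ (pZ t) (y - ξ - t • b₀)‖)
        ≤ C' * (1 + l⁻¹) := by
  set η : ℝ := (1 + β) / 2 with hη
  have hβη : β < η := by linarith
  set M := ∫ z, ‖z‖ ^ η * qbar 1 z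
  have hM : 0 ≤ M := integral_nonneg fun z => mul_nonneg (by positivity) (hqpos 1 one_pos z)
  have hrescale : ∀ t > (0:ℝ), ∀ z, qbar t z =
      t ^ (-(Module.finrank ℝ (EuclideanSpace ℝ (Fin d)) : ℝ)) * qbar 1 (t⁻¹ • z) :=
    fun t ht z => by simpa using hqscale t ht z
  refine ⟨2 + ‖b₀‖, by linarith [norm_nonneg b₀], C * (2 * M / (η - β) + 2 / β),
    fun l hl x ξ => ?_⟩
  have hC' : 0 ≤ C * (2 * M / (η - β) + 2 / β) := by have := sub_pos.2 hβη; positivity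
  rcases eq_or_ne x ξ with rfl | hxξ
  · simp only [sub_self, norm_zero, integral_zero, mul_zero]
    positivity
  have hS : MeasurableSet {y : EuclideanSpace ℝ (Fin d) | (2 + ‖b₀‖) * ‖x - ξ‖ ≤ ‖x - y‖} :=
    (isClosed_le continuous_const (continuous_const.sub continuous_id).norm).measurableSet
  have hdamp : ∀ t > (0:ℝ), ∀ {I : ℝ}, 0 ≤ I → exp (-l * t) * I ≤ I := fun t ht I hI =>
    mul_le_of_le_one_left hI (exp_le_one_iff.2 (by nlinarith))
  refine (setIntegral_Ioi_le_of_scaled_bounds hβ hβη (norm_sub_pos_iff.2 hxξ)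
    (fun t _ => by positivity) (fun t ⟨ht, htr⟩ => ?_) (fun t htr => ?_)).trans
    (le_mul_of_one_le_right hC' (by linarith [inv_pos.2 (one_pos.trans_le hl)]))
  · have hdrift : ‖t • b₀‖ ≤ ‖b₀‖ * ‖x - ξ‖ := by
      rw [norm_smul, norm_of_nonneg ht.le, mul_comm]
      gcongr
    refine (hdamp t ht (integral_nonneg fun _ => norm_nonneg _)).trans <|
      (setIntegral_norm_sub_translates_le_of_far hC.le ht (hHolder t ht) (hqpos t ht)
        (by positivity) (integrable_norm_rpow_mul_of_rescale volume ht (hrescale t ht)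
          (hmom η (by positivity) (by linarith))) hxξ hdrift hS fun _ hy => hy).trans_eq ?_
    rw [integral_norm_rpow_mul_of_rescale volume ht (hrescale t ht), div_rpow ht.le (norm_nonneg _)]
    ring
  · have ht : 0 < t := (norm_sub_pos_iff.2 hxξ).trans htr
    exact (hdamp t ht (integral_nonneg fun _ => norm_nonneg _)).trans <|
      setIntegral_norm_sub_translates_le hC.le ht (hHolder t ht) (hqpos t ht) (hqint t ht) x ξ _ _

theorem stmt11 (d : ℕ) (b₀ : EuclideanSpace ℝ (Fin d))
    (pZ : ℝ → EuclideanSpace ℝ (Fin d) → ℝ)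
    (qbar : ℝ → EuclideanSpace ℝ (Fin d) → ℝ)
    (hqpos : ∀ t > (0:ℝ), ∀ x, 0 ≤ qbar t x)
    (hqint : ∀ t > (0:ℝ), ∫ x, qbar t x = 1)
    (hqscale : ∀ t > (0:ℝ), ∀ x, qbar t x = t ^ (-(d : ℝ)) * qbar 1 (t⁻¹ • x))
    (C β : ℝ) (hC : 0 < C) (hβ : 0 < β) (hβ1 : β < 1)
    (hHolder : ∀ t > (0:ℝ), ∀ z z' : EuclideanSpace ℝ (Fin d),
      ‖fderiv ℝ (pZ t) z - fderiv ℝ (pZ t) z'‖ ≤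
        (C / t) * (‖z - z'‖ / t) ^ β * (qbar t z + qbar t z'))
    (hpert : ∀ t > (0:ℝ), ∀ (x h : EuclideanSpace ℝ (Fin d)), ‖h‖ ≤ ‖b₀‖ * t →
      qbar t (x + h) ≤ C * qbar t x)
    (hmom : ∀ η : ℝ, 0 < η → η < 1 → Integrable (fun z => ‖z‖ ^ η * qbar 1 z)) :
    ∃ K : ℝ, 1 ≤ K ∧ ∃ C' : ℝ, ∀ l : ℝ, 1 ≤ l → ∀ x ξ : EuclideanSpace ℝ (Fin d),
      (∫ t in Set.Ioi (0:ℝ), Real.exp (-l * t) *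
          ∫ y in {y : EuclideanSpace ℝ (Fin d) | K * ‖x - ξ‖ ≤ ‖x - y‖},
            ‖fderiv ℝ (pZ t) (y - x - t • b₀) - fderiv ℝ (pZ t) (y - ξ - t • b₀)‖)
        ≤ C' * (1 + l⁻¹) :=
  stmt11_general d b₀ pZ qbar hqpos hqint hqscale C β hC hβ hβ1 hHolder hmom
end

section
/- Let q̄ : (0,∞) × ℝ^d → [0,∞) be measurable with q̄(t,·) a probability density and suppose there are C ≥ 1, β ∈ (0,1) such that, for a differentiable function p : (0,∞) × ℝ^d → ℝ: |Dp(t,z)| ≤ (C/t) q̄(t,z), |D²p(t,z)| ≤ (C/t²) q̄(t,z), and q̄(t, z + h) ≤ C q̄(t,z) for |h| ≤ t. Then there exists C_β such that for all t > 0 and z, z' ∈ ℝ^d: |Dp(t,z) − Dp(t,z')| ≤ (C_β/t)(|z−z'|/t)^β ( q̄(t,z) + q̄(t,z') ). -/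
open MeasureTheory Real

theorem stmt18 (d : ℕ)
    (qbar : ℝ → EuclideanSpace ℝ (Fin d) → ℝ)
    (hqpos : ∀ t > (0:ℝ), ∀ x, 0 ≤ qbar t x)
    (hqint : ∀ t > (0:ℝ), ∫ x, qbar t x = 1)
    (p : ℝ → EuclideanSpace ℝ (Fin d) → ℝ)
    (hdiff : ∀ t > (0:ℝ), Differentiable ℝ (p t))
    (hdiff2 : ∀ t > (0:ℝ), Differentiable ℝ (fderiv ℝ (p t)))
    (C β : ℝ) (hC : 1 ≤ C) (hβ : 0 < β) (hβ1 : β < 1)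
    (h1 : ∀ t > (0:ℝ), ∀ z, ‖fderiv ℝ (p t) z‖ ≤ (C / t) * qbar t z)
    (h2 : ∀ t > (0:ℝ), ∀ z, ‖fderiv ℝ (fderiv ℝ (p t)) z‖ ≤ (C / t ^ 2) * qbar t z)
    (h3 : ∀ t > (0:ℝ), ∀ (z h : EuclideanSpace ℝ (Fin d)), ‖h‖ ≤ t →
      qbar t (z + h) ≤ C * qbar t z) :
    ∃ Cβ : ℝ, ∀ t > (0:ℝ), ∀ z z' : EuclideanSpace ℝ (Fin d),
      ‖fderiv ℝ (p t) z - fderiv ℝ (p t) z'‖ ≤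
        (Cβ / t) * (‖z - z'‖ / t) ^ β * (qbar t z + qbar t z') := by
  refine ⟨C ^ 2, fun t ht z z' => ?_⟩
  have hC0 : 0 < C := lt_of_lt_of_le one_pos hC
  set r := ‖z - z'‖ with hr
  have hr0 : 0 ≤ r := norm_nonneg _
  have hq := hqpos t ht
  have hqsum : 0 ≤ qbar t z + qbar t z' := add_nonneg (hq z) (hq z')
  rcases le_or_gt r t with hle | hgt
  · -- near-diagonal case: mean value theorem on the closed ball
    rcases eq_or_lt_of_le hr0 with h0 | hrpos
    · have hz : z = z' := sub_eq_zero.mp (norm_eq_zero.mp h0.symm)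
      simp [hz, sub_self, Real.zero_rpow hβ.ne']
      exact mul_nonneg (mul_nonneg (by positivity)
        (Real.rpow_nonneg (div_nonneg hr0 ht.le) _)) (by linarith [hq z'])
    · have hM : ∀ x ∈ Metric.closedBall z' t,
          ‖fderiv ℝ (fderiv ℝ (p t)) x‖ ≤ (C / t ^ 2) * (C * qbar t z') := by
        intro x hx
        have hxz : ‖x - z'‖ ≤ t := by
          have := Metric.mem_closedBall.mp hx
          rwa [dist_eq_norm] at this
        have hq3 : qbar t x ≤ C * qbar t z' := by
          have := h3 t ht z' (x - z') hxz
          simpa using this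
        calc ‖fderiv ℝ (fderiv ℝ (p t)) x‖ ≤ (C / t ^ 2) * qbar t x := h2 t ht x
          _ ≤ (C / t ^ 2) * (C * qbar t z') := by
              apply mul_le_mul_of_nonneg_left hq3
              positivity
      have hmem : z ∈ Metric.closedBall z' t := by
        rw [Metric.mem_closedBall, dist_eq_norm]; exact hle
      have hmem' : z' ∈ Metric.closedBall z' t := Metric.mem_closedBall_self ht.le
      have hmv := (convex_closedBall z' t).norm_image_sub_le_of_norm_fderiv_le
        (fun x _ => (hdiff2 t ht) x) hM hmem' hmem
      have key : ‖fderiv ℝ (p t) z - fderiv ℝ (p t) z'‖ ≤ (C / t ^ 2) * (C * qbar t z') * r :=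
        hmv
      refine key.trans ?_
      have hrt : r / t ≤ (r / t) ^ β := by
        have h1' : r / t ≤ 1 := (div_le_one ht).mpr hle
        have hpos : 0 < r / t := div_pos hrpos ht
        calc r / t = (r / t) ^ (1:ℝ) := (Real.rpow_one _).symm
          _ ≤ (r / t) ^ β := Real.rpow_le_rpow_of_exponent_ge hpos h1' hβ1.le
      have e1 : (C / t ^ 2) * (C * qbar t z') * r
          = (C ^ 2 / t) * (r / t) * qbar t z' := by
        field_simp
      rw [e1]
      have step : (C ^ 2 / t) * (r / t) * qbar t z'
          ≤ (C ^ 2 / t) * (r / t) ^ β * qbar t z' := by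
        apply mul_le_mul_of_nonneg_right _ (hq z')
        apply mul_le_mul_of_nonneg_left hrt
        positivity
      refine step.trans ?_
      apply mul_le_mul_of_nonneg_left _ (by positivity : (0:ℝ) ≤ (C ^ 2 / t) * (r / t) ^ β)
      linarith [hq z]
  · -- off-diagonal case
    have htri : ‖fderiv ℝ (p t) z - fderiv ℝ (p t) z'‖ ≤ (C / t) * (qbar t z + qbar t z') := by
      calc ‖fderiv ℝ (p t) z - fderiv ℝ (p t) z'‖
          ≤ ‖fderiv ℝ (p t) z‖ + ‖fderiv ℝ (p t) z'‖ := norm_sub_le _ _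
        _ ≤ (C / t) * qbar t z + (C / t) * qbar t z' := add_le_add (h1 t ht z) (h1 t ht z')
        _ = (C / t) * (qbar t z + qbar t z') := by ring
    refine htri.trans ?_
    have hone : 1 ≤ (r / t) ^ β := by
      apply Real.one_le_rpow _ hβ.le
      exact (one_le_div ht).mpr hgt.le
    have hCle : C / t ≤ (C ^ 2 / t) * (r / t) ^ β := by
      have : C / t ≤ C ^ 2 / t := by
        gcongr
        nlinarith
      calc C / t = (C / t) * 1 := (mul_one _).symm
        _ ≤ (C ^ 2 / t) * (r / t) ^ β := by
            apply mul_le_mul this hone one_pos.le (by positivity)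
    exact mul_le_mul_of_nonneg_right hCle hqsum
end
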